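/- (Condition (A1) for independent bounded zero-mean noise and biclustering projections, Section on the biclustering model.) Let ξ = (ξ_{ij})_{(i,j) ∈ [n₁]×[n₂]} be independent random variables with E ξ_{ij} = 0 and |ξ_{ij}| ≤ 1 almost surely. Let a row partition (I₁ᵃ)_{a∈[k₁]} of [n₁] and a column partition (I₂ᵇ)_{b∈[k₂]} of [n₂] be given, determining the partition of [n₁]×[n₂] into the k₁k₂ blocks I₁ᵃ × I₂ᵇ; let L_I ⊆ ℝ^{n₁n₂} be the subspace of arrays that are constant on each block, and P_I the orthogonal projection onto L_I. Then, with b₀ = (e−1)/(2(e+1)), E exp( b₀ ‖P_I ξ‖² ) ≤ e^{k₁k₂}. -/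

import Mathlib

open MeasureTheory Real ProbabilityTheory

/-- The orthogonal projection onto a linear subspace, as a map `E → E`. -/
noncomputable def proj {N : Type*} [Fintype N] (K : Submodule ℝ (EuclideanSpace ℝ N)) :
    EuclideanSpace ℝ N →L[ℝ] EuclideanSpace ℝ N :=
  K.subtypeL.comp (K.orthogonalProjectionOnto)

/-- The subspace of `n₁ × n₂` arrays that are constant on each block of the biclustering
partition determined by the cluster assignments `z₁ : [n₁] → [k₁]` and `z₂ : [n₂] → [k₂]`. -/
def blockSubspace {n₁ n₂ k₁ k₂ : ℕ} (z₁ : Fin n₁ → Fin k₁) (z₂ : Fin n₂ → Fin k₂) :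
    Submodule ℝ (EuclideanSpace ℝ (Fin n₁ × Fin n₂)) where
  carrier := {x | ∀ p q : Fin n₁ × Fin n₂, z₁ p.1 = z₁ q.1 → z₂ p.2 = z₂ q.2 → x p = x q}
  add_mem' := by
    intro a b ha hb p q h1 h2
    show a p + b p = a q + b q
    rw [ha p q h1 h2, hb p q h1 h2]
  zero_mem' := by intro p q _ _; rfl
  smul_mem' := by
    intro c a ha p q h1 h2
    show c • a p = c • a q
    rw [ha p q h1 h2]

/-!
Write `S_B = ∑_{(i,j) ∈ B} ξ_{ij}` for a block `B`, so that `‖P_I ξ‖² = ∑_B S_B² / |B|`. Blocks are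
disjoint, so the `S_B` are independent and `E exp(b₀‖P_I ξ‖²) = ∏_B E exp(b₀ S_B² / |B|)`. By
Hoeffding's lemma each `ξ_{ij}` is `1`-sub-Gaussian, hence `S_B` is `|B|`-sub-Gaussian and
`P(S_B² / |B| ≥ t) ≤ 2 e^{-t/2}`. The layer-cake formula turns this tail bound into
`E exp(b S_B² / |B|) ≤ 1 + 2b / (1/2 - b)` for `0 ≤ b < 1/2`, and `b₀` is the value of `b` for which
the right-hand side is `e`.
-/

open Finset RealInnerProductSpace

lemma integral_mul_exp_mul (b y : ℝ) : ∫ s in (0 : ℝ)..y, b * exp (b * s) = exp (b * y) - 1 := by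
  have hderiv (s : ℝ) : HasDerivAt (fun s ↦ exp (b * s)) (b * exp (b * s)) s := by
    simpa [mul_comm] using ((hasDerivAt_id s).const_mul b).exp
  rw [intervalIntegral.integral_eq_sub_of_hasDerivAt (fun s _ ↦ hderiv s)
    ((by fun_prop : Continuous fun s ↦ b * exp (b * s)).intervalIntegrable 0 y)]
  simp

namespace ProbabilityTheory

variable {Ω : Type*} {mΩ : MeasurableSpace Ω} {μ : Measure Ω}

theorem iIndepFun.curry {ι : Type*} {κ : ι → Type*} {𝓧 : (i : ι) → κ i → Type*}
    {m𝓧 : ∀ i j, MeasurableSpace (𝓧 i j)} {X : (i : ι) → (j : κ i) → Ω → 𝓧 i j}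
    (mX : ∀ i j, Measurable (X i j)) (h : iIndepFun (fun (p : (i : ι) × κ i) ω ↦ X p.1 p.2 ω) μ) :
    iIndepFun (fun i ω ↦ (X i · ω)) μ := by
  have := h.isProbabilityMeasure
  have : ∀ i j, IsProbabilityMeasure (μ.map (X i j)) :=
    fun i j ↦ Measure.isProbabilityMeasure_map (mX i j).aemeasurable
  have h_row (i : ι) :
      μ.map (fun ω ↦ (X i · ω)) = Measure.infinitePi fun j ↦ μ.map (X i j) :=
    (h.precomp sigma_mk_injective).map_fun_eq_infinitePi_map (mX i)
  rw [iIndepFun_iff_map_fun_eq_infinitePi_map fun i ↦ by fun_prop]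
  simp_rw [h_row]
  rw [← Measure.infinitePi_map_piCurry, ← h.map_fun_eq_infinitePi_map fun p ↦ mX p.1 p.2,
    Measure.map_map (by fun_prop) (by fun_prop)]
  rfl

theorem iIndepFun.sum_fiberwise {ι κ : Type*} [Fintype ι] [DecidableEq κ] {X : ι → Ω → ℝ}
    (h : iIndepFun X μ) (mX : ∀ i, Measurable (X i)) (f : ι → κ) :
    iIndepFun (fun k ω ↦ ∑ i with f i = k, X i ω) μ := by
  have h_fibers : iIndepFun (fun k ω (i : {i // f i = k}) ↦ X i ω) μ :=
    iIndepFun.curry (X := fun k (i : {i // f i = k}) ↦ X i) (fun _ i ↦ mX i)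
      (h.precomp (Equiv.sigmaFiberEquiv f).injective)
  convert h_fibers.comp (fun _ v ↦ ∑ i, v i) (fun _ ↦ by fun_prop) using 2 with k
  funext ω
  exact sum_subtype _ (by simp) _

theorem lintegral_prod_le_pow_of_iIndepFun {ι : Type*} [Fintype ι] {F : ι → Ω → ENNReal}
    (hF : iIndepFun F μ) (mF : ∀ i, Measurable (F i)) {A : ENNReal}
    (hA : ∀ i, ∫⁻ ω, F i ω ∂μ ≤ A) :
    ∫⁻ ω, ∏ i, F i ω ∂μ ≤ A ^ Fintype.card ι := by
  rw [lintegral_prod_eq_prod_lintegral_of_indepFun _ _ hF mF, ← card_univ, ← prod_const]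
  exact prod_le_prod' fun i _ ↦ hA i

lemma lintegral_exp_mul_le_of_measureReal_ge_le [IsProbabilityMeasure μ] {Y : Ω → ℝ}
    (hY : 0 ≤ᵐ[μ] Y) (hYm : AEMeasurable Y μ) {C a : ℝ}
    (htail : ∀ t > 0, μ.real {ω | t ≤ Y ω} ≤ C * exp (-(a * t))) {b : ℝ} (hb0 : 0 ≤ b)
    (hba : b < a) :
    ∫⁻ ω, ENNReal.ofReal (exp (b * Y ω)) ∂μ ≤ ENNReal.ofReal (1 + C * b / (a - b)) := by
  have hC : 0 ≤ C := nonneg_of_mul_nonneg_left (measureReal_nonneg.trans (htail 1 one_pos))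
    (exp_pos _)
  have hdecay : IntegrableOn (fun t ↦ C * b * exp ((b - a) * t)) (Set.Ioi 0) :=
    (integrableOn_exp_mul_Ioi (by linarith) 0).const_mul _
  have hdecay_integral : ∫ t in Set.Ioi 0, C * b * exp ((b - a) * t) = C * b / (a - b) := by
    rw [integral_const_mul, integral_exp_mul_Ioi (by linarith), mul_zero, exp_zero, ← neg_sub a b,
      neg_div_neg_eq, mul_one_div]
  calc ∫⁻ ω, ENNReal.ofReal (exp (b * Y ω)) ∂μ
      = ∫⁻ ω, 1 + ENNReal.ofReal (∫ s in (0 : ℝ)..Y ω, b * exp (b * s)) ∂μ := by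
        refine lintegral_congr_ae (hY.mono fun ω hω ↦ ?_)
        dsimp only
        rw [integral_mul_exp_mul, ← ENNReal.ofReal_one, ← ENNReal.ofReal_add zero_le_one
          (sub_nonneg.2 (one_le_exp (mul_nonneg hb0 hω))), add_sub_cancel]
    _ = 1 + ∫⁻ t in Set.Ioi 0, μ {ω | t ≤ Y ω} * ENNReal.ofReal (b * exp (b * t)) := by
        rw [lintegral_add_left measurable_const, lintegral_const, measure_univ, mul_one,
          lintegral_comp_eq_lintegral_meas_le_mul μ hY hYm
            (fun t _ ↦ (by fun_prop : Continuous fun s ↦ b * exp (b * s)).intervalIntegrable 0 t)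
            (ae_of_all _ fun t ↦ by positivity)]
    _ ≤ 1 + ∫⁻ t in Set.Ioi 0, ENNReal.ofReal (C * b * exp ((b - a) * t)) := by
        gcongr 1
        refine setLIntegral_mono
          (by fun_prop : Measurable fun t ↦ ENNReal.ofReal (C * b * exp ((b - a) * t)))
          fun t ht ↦ ?_
        rw [← ofReal_measureReal, ← ENNReal.ofReal_mul measureReal_nonneg]
        refine ENNReal.ofReal_le_ofReal ?_
        calc μ.real {ω | t ≤ Y ω} * (b * exp (b * t))
            ≤ C * exp (-(a * t)) * (b * exp (b * t)) := by gcongr; exact htail t ht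
          _ = C * b * exp ((b - a) * t) := by rw [mul_mul_mul_comm, ← exp_add]; ring_nf
    _ = ENNReal.ofReal (1 + C * b / (a - b)) := by
        rw [← ofReal_integral_eq_lintegral_ofReal hdecay (ae_of_all _ fun t ↦ by positivity),
          hdecay_integral, ENNReal.ofReal_add zero_le_one
          (div_nonneg (mul_nonneg hC hb0) (sub_nonneg.2 hba.le)), ENNReal.ofReal_one]

lemma HasSubgaussianMGF.measureReal_sq_div_ge_le [IsFiniteMeasure μ] {X : Ω → ℝ} {c : NNReal}
    (h : HasSubgaussianMGF X c μ) {t : ℝ} (ht : 0 < t) :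
    μ.real {ω | t ≤ X ω ^ 2 / c} ≤ 2 * exp (-(1 / 2 * t)) := by
  rcases eq_or_ne c 0 with rfl | hc
  · simp [ht.not_ge, (exp_pos _).le]
  have hc' : (0 : ℝ) < c := by positivity
  set ε := √(t * c)
  have hε : -ε ^ 2 / (2 * c) = -(1 / 2 * t) := by
    rw [Real.sq_sqrt (by positivity)]
    field_simp
  have hsplit : {ω | t ≤ X ω ^ 2 / c} ⊆ {ω | ε ≤ X ω} ∪ {ω | ε ≤ (-X) ω} := by
    intro ω hω
    have hεX : ε ≤ |X ω| := by
      rw [← Real.sqrt_sq_eq_abs]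
      exact Real.sqrt_le_sqrt ((le_div_iff₀ hc').1 hω)
    exact le_abs.1 hεX
  calc μ.real {ω | t ≤ X ω ^ 2 / c}
      ≤ μ.real {ω | ε ≤ X ω} + μ.real {ω | ε ≤ (-X) ω} :=
        (measureReal_mono hsplit).trans (measureReal_union_le _ _)
    _ ≤ exp (-ε ^ 2 / (2 * c)) + exp (-ε ^ 2 / (2 * c)) :=
        add_le_add (h.measure_ge_le (sqrt_nonneg _)) (h.neg.measure_ge_le (sqrt_nonneg _))
    _ = 2 * exp (-(1 / 2 * t)) := by rw [hε]; ring

lemma HasSubgaussianMGF.lintegral_exp_mul_sq_div_le [IsProbabilityMeasure μ] {X : Ω → ℝ}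
    {c : NNReal} (h : HasSubgaussianMGF X c μ) {b : ℝ} (hb0 : 0 ≤ b) (hb : b < 1 / 2) :
    ∫⁻ ω, ENNReal.ofReal (exp (b * (X ω ^ 2 / c))) ∂μ ≤ ENNReal.ofReal (1 + 2 * b / (1 / 2 - b)) :=
  lintegral_exp_mul_le_of_measureReal_ge_le (ae_of_all _ fun _ ↦ by positivity)
    ((h.aemeasurable.pow_const 2).div_const _) (fun _ ht ↦ h.measureReal_sq_div_ge_le ht) hb0 hb

lemma lintegral_exp_mul_sq_sum_div_card_le [IsProbabilityMeasure μ] {ι : Type*}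
    {X : ι → Ω → ℝ} (hX : iIndepFun X μ) (mX : ∀ i, AEMeasurable (X i) μ)
    (hmean : ∀ i, ∫ ω, X i ω ∂μ = 0) (hbdd : ∀ i, ∀ᵐ ω ∂μ, |X i ω| ≤ 1) (s : Finset ι) {b : ℝ}
    (hb0 : 0 ≤ b) (hb : b < 1 / 2) :
    ∫⁻ ω, ENNReal.ofReal (exp (b * ((∑ i ∈ s, X i ω) ^ 2 / #s))) ∂μ
      ≤ ENNReal.ofReal (1 + 2 * b / (1 / 2 - b)) := by
  have h_unit (i : ι) : HasSubgaussianMGF (X i) 1 μ := by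
    convert hasSubgaussianMGF_of_mem_Icc_of_integral_eq_zero (mX i)
      ((hbdd i).mono fun ω h ↦ abs_le.1 h) (hmean i)
    ext
    norm_num
  simpa using (HasSubgaussianMGF.sum_of_iIndepFun hX fun i _ ↦ h_unit i).lintegral_exp_mul_sq_div_le
    hb0 hb

end ProbabilityTheory

section FiberConstant

variable {ι κ : Type*} [Fintype ι] [DecidableEq κ]

def fiberConstSubspace (f : ι → κ) : Submodule ℝ (EuclideanSpace ℝ ι) where
  carrier := {x | ∀ i j, f i = f j → x i = x j}
  add_mem' hx hy i j h := by simp [hx i j h, hy i j h]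
  zero_mem' _ _ _ := rfl
  smul_mem' c x hx i j h := by simp [hx i j h]

noncomputable def fiberAverage (f : ι → κ) (x : EuclideanSpace ℝ ι) : EuclideanSpace ℝ ι :=
  WithLp.toLp 2 fun i ↦ (∑ j with f j = f i, x j) / #{j | f j = f i}

variable {f : ι → κ}

lemma fiberAverage_apply_of_eq {x : EuclideanSpace ℝ ι} {k : κ} {i : ι} (hi : f i = k) :
    fiberAverage f x i = (∑ j with f j = k, x j) / #{j | f j = k} := by
  simp [fiberAverage, hi]

lemma fiberAverage_mem (x : EuclideanSpace ℝ ι) : fiberAverage f x ∈ fiberConstSubspace f := by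
  intro i j h
  simp [fiberAverage, h]

variable [Fintype κ]

lemma inner_sub_fiberAverage_eq_zero (x : EuclideanSpace ℝ ι) {w : EuclideanSpace ℝ ι}
    (hw : w ∈ fiberConstSubspace f) : ⟪x - fiberAverage f x, w⟫ = 0 := by
  have h_inner : ⟪x - fiberAverage f x, w⟫ = ∑ i, (x i - fiberAverage f x i) * w i := by
    simp [PiLp.inner_apply, mul_comm]
  rw [h_inner, ← sum_fiberwise univ f]
  refine sum_eq_zero fun k _ ↦ ?_
  rcases eq_empty_or_nonempty {i | f i = k} with hk | ⟨i₀, hi₀⟩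
  · simp [hk]
  have hcard : (#{i | f i = k} : ℝ) ≠ 0 := Nat.cast_ne_zero.2 (card_ne_zero_of_mem hi₀)
  have hw_const : ∀ i, f i = k → w i = w i₀ := fun i hi ↦
    hw i i₀ (hi.trans (mem_filter.1 hi₀).2.symm)
  rw [sum_congr rfl fun i hi ↦ by
      rw [hw_const i (mem_filter.1 hi).2, fiberAverage_apply_of_eq (mem_filter.1 hi).2],
    ← sum_mul, sum_sub_distrib, sum_const, nsmul_eq_mul, mul_div_cancel₀ _ hcard, sub_self,
    zero_mul]

lemma proj_fiberConstSubspace (x : EuclideanSpace ℝ ι) :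
    proj (fiberConstSubspace f) x = fiberAverage f x :=
  (fiberConstSubspace f).eq_starProjection_of_mem_of_inner_eq_zero (fiberAverage_mem x)
    fun _ hw ↦ inner_sub_fiberAverage_eq_zero x hw

lemma norm_fiberAverage_sq (x : EuclideanSpace ℝ ι) :
    ‖fiberAverage f x‖ ^ 2 = ∑ k, (∑ i with f i = k, x i) ^ 2 / #{i | f i = k} := by
  rw [EuclideanSpace.norm_sq_eq, ← sum_fiberwise univ f]
  refine sum_congr rfl fun k _ ↦ ?_
  rw [sum_congr rfl fun i hi ↦ by
      rw [Real.norm_eq_abs, sq_abs, fiberAverage_apply_of_eq (mem_filter.1 hi).2],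
    sum_const, nsmul_eq_mul]
  rcases eq_or_ne (#{i | f i = k} : ℝ) 0 with h | h
  · simp [h]
  · field_simp

end FiberConstant

lemma norm_proj_blockSubspace_sq {n₁ n₂ k₁ k₂ : ℕ} (z₁ : Fin n₁ → Fin k₁) (z₂ : Fin n₂ → Fin k₂)
    (x : EuclideanSpace ℝ (Fin n₁ × Fin n₂)) :
    ‖proj (blockSubspace z₁ z₂) x‖ ^ 2
      = ∑ ab, (∑ p with (z₁ p.1, z₂ p.2) = ab, x p) ^ 2 / #{p : Fin n₁ × Fin n₂ | (z₁ p.1, z₂ p.2) = ab} := by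
  have h_fibers : blockSubspace z₁ z₂ = fiberConstSubspace fun p ↦ (z₁ p.1, z₂ p.2) := by
    ext x
    simp [blockSubspace, fiberConstSubspace, Prod.ext_iff]
  rw [h_fibers, proj_fiberConstSubspace, norm_fiberAverage_sq]

lemma exp_one_sub_one_div_spec :
    0 ≤ (exp 1 - 1) / (2 * (exp 1 + 1)) ∧ (exp 1 - 1) / (2 * (exp 1 + 1)) < 1 / 2 ∧
      1 + 2 * ((exp 1 - 1) / (2 * (exp 1 + 1))) / (1 / 2 - (exp 1 - 1) / (2 * (exp 1 + 1)))
        = exp 1 := by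
  have he : 1 ≤ exp 1 := one_le_exp zero_le_one
  refine ⟨by positivity, by rw [div_lt_iff₀ (by positivity)]; linarith, ?_⟩
  field_simp
  ring

/-- **Condition (A1) for independent bounded zero-mean noise and biclustering projections**
(Section on the biclustering model): if the `ξ_{ij}` are independent, mean zero and bounded by
`1`, and `P_I` is the projection onto the block-constant subspace of a `k₁ × k₂` biclustering
partition, then `E exp(b₀‖P_I ξ‖²) ≤ e^{k₁k₂}` with `b₀ = (e−1)/(2(e+1))`. -/
theorem biclustering_bounded_noise_A1
    {n₁ n₂ k₁ k₂ : ℕ} {Ω : Type*} [MeasurableSpace Ω]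
    (μ : Measure Ω) [IsProbabilityMeasure μ]
    (ξ : Ω → EuclideanSpace ℝ (Fin n₁ × Fin n₂))
    (hmeas : ∀ p : Fin n₁ × Fin n₂, Measurable fun ω => ξ ω p)
    (hindep : iIndepFun (m := fun _ : Fin n₁ × Fin n₂ => inferInstanceAs (MeasurableSpace ℝ))
      (fun p ω => ξ ω p) μ)
    (hmean : ∀ p : Fin n₁ × Fin n₂, ∫ ω, ξ ω p ∂μ = 0)
    (hbdd : ∀ p : Fin n₁ × Fin n₂, ∀ᵐ ω ∂μ, |ξ ω p| ≤ 1)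
    (z₁ : Fin n₁ → Fin k₁) (z₂ : Fin n₂ → Fin k₂) :
    ∫⁻ ω, ENNReal.ofReal
        (exp ((exp 1 - 1) / (2 * (exp 1 + 1)) * ‖proj (blockSubspace z₁ z₂) (ξ ω)‖ ^ 2)) ∂μ
      ≤ ENNReal.ofReal (exp (k₁ * k₂)) := by
  obtain ⟨hb₀, hb₀_lt, hb₀_exp⟩ := exp_one_sub_one_div_spec
  set b₀ := (exp 1 - 1) / (2 * (exp 1 + 1))
  set blk : Fin n₁ × Fin n₂ → Fin k₁ × Fin k₂ := fun p ↦ (z₁ p.1, z₂ p.2)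
  let G (ab : Fin k₁ × Fin k₂) (x : ℝ) : ENNReal :=
    ENNReal.ofReal (exp (b₀ * (x ^ 2 / #{p | blk p = ab})))
  have hG (ab : Fin k₁ × Fin k₂) : Measurable (G ab) := by fun_prop
  have h_block (ab : Fin k₁ × Fin k₂) :
      ∫⁻ ω, G ab (∑ p with blk p = ab, ξ ω p) ∂μ ≤ ENNReal.ofReal (exp 1) :=
    hb₀_exp ▸ lintegral_exp_mul_sq_sum_div_card_le hindep (fun p ↦ (hmeas p).aemeasurable) hmean
      hbdd _ hb₀ hb₀_lt
  calc ∫⁻ ω, ENNReal.ofReal (exp (b₀ * ‖proj (blockSubspace z₁ z₂) (ξ ω)‖ ^ 2)) ∂μ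
      = ∫⁻ ω, ∏ ab, G ab (∑ p with blk p = ab, ξ ω p) ∂μ := by
        simp_rw [norm_proj_blockSubspace_sq, mul_sum, exp_sum,
          ENNReal.ofReal_prod_of_nonneg fun _ _ ↦ (exp_pos _).le]
        rfl
    _ ≤ ENNReal.ofReal (exp 1) ^ Fintype.card (Fin k₁ × Fin k₂) :=
        lintegral_prod_le_pow_of_iIndepFun ((hindep.sum_fiberwise hmeas blk).comp G hG)
          (fun ab ↦ (hG ab).comp (Finset.measurable_sum _ fun p _ ↦ hmeas p)) h_block
    _ = ENNReal.ofReal (exp (k₁ * k₂)) := by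
        rw [Fintype.card_prod, Fintype.card_fin, Fintype.card_fin,
          ← ENNReal.ofReal_pow (exp_pos 1).le, ← exp_nat_mul]
        push_cast
        ring_nf
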